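/- Shifting theorem (α-approximate solver, vertical strips): Let S be a finite set of points in the Euclidean plane, ℓ a positive integer, and α ≥ 1 a real number. Suppose A assigns to every subset T ⊆ S a set A(T) ⊆ S that dominates T and satisfies |A(T)| ≤ α · γ_S(T). For a shift j ∈ {0, 1, …, ℓ-1} and an integer k, let B_{j,k} = {p ∈ S : 2(ℓk + j) ≤ p₁ < 2(ℓ(k+1) + j)}. Then there exists a shift j ∈ {0, 1, …, ℓ-1} such that Σ_k |A(B_{j,k})| ≤ α · (1 + 1/ℓ) · γ_S(S), where the sum ranges over the integers k with B_{j,k} nonempty; moreover for each j the union ⋃_k A(B_{j,k}) dominates S. -/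

import Mathlib

/-- The Euclidean plane. -/
abbrev Plane : Type := EuclideanSpace ℝ (Fin 2)

noncomputable instance : DecidableEq Plane := Classical.decEq _

attribute [local instance] Classical.propDecidable

/-- `D` dominates `T` if every point of `T` is within distance `1` of some point of `D`. -/
def Dominates (D T : Finset Plane) : Prop := ∀ p ∈ T, ∃ q ∈ D, dist p q ≤ 1

/-- `gamma S T` is the minimum cardinality of a subset of `S` that dominates `T`. -/
noncomputable def gamma (S T : Finset Plane) : ℕ :=
  sInf {n : ℕ | ∃ D ⊆ S, Dominates D T ∧ D.card = n}

/-- The `k`-th block of shift `j` of `S` (blocks of `ℓ` consecutive vertical strips of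
width `2`): the points `p ∈ S` with `2(ℓk + j) ≤ p₁ < 2(ℓ(k+1) + j)`. -/
noncomputable def block (S : Finset Plane) (ℓ j : ℕ) (k : ℤ) : Finset Plane :=
  S.filter fun p =>
    2 * ((ℓ : ℝ) * (k : ℝ) + (j : ℝ)) ≤ p 0 ∧ p 0 < 2 * ((ℓ : ℝ) * ((k : ℝ) + 1) + (j : ℝ))

/-! Fix a minimum dominating set `D` of `S`. A point of `B_{j,k}` is dominated by a point of `D`
whose first coordinate lies within `1` of the slab of `B_{j,k}`, so `γ_S(B_{j,k})` is at most the
number of points of `D` in that thickened slab. Each point of `D` lies in the thickened slabs of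
exactly `ℓ + 1` pairs `(j, k)`, so summing over the `ℓ` shifts counts `D` at most `ℓ + 1` times,
and some shift `j` gets at most `(1 + 1/ℓ)|D|`. -/

open Finset

lemma gamma_le_card {S T D : Finset Plane} (hDS : D ⊆ S) (hD : Dominates D T) :
    gamma S T ≤ #D :=
  Nat.sInf_le ⟨D, hDS, hD, rfl⟩

lemma exists_dominates_card_eq_gamma {S T : Finset Plane} (hTS : T ⊆ S) :
    ∃ D ⊆ S, Dominates D T ∧ #D = gamma S T :=
  Nat.sInf_mem (s := {n | ∃ D ⊆ S, Dominates D T ∧ #D = n})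
    ⟨#T, T, hTS, fun p hp => ⟨p, hp, by simp⟩, rfl⟩

lemma Dominates.filter {D T : Finset Plane} (hD : Dominates D T) (P : Plane → Prop)
    [DecidablePred P] (hP : ∀ p ∈ T, ∀ q ∈ D, dist p q ≤ 1 → P q) :
    Dominates (D.filter P) T := by
  intro p hp
  obtain ⟨q, hq, hpq⟩ := hD p hp
  exact ⟨q, mem_filter.2 ⟨hq, hP p hp q hq hpq⟩, hpq⟩

section Blocks

variable {ℓ : ℕ} (j : ℕ)

noncomputable def blockIndex (ℓ j : ℕ) (p : Plane) : ℤ := ⌊(p 0 - 2 * j) / (2 * ℓ)⌋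

lemma mem_block_iff (hℓ : 0 < ℓ) {S : Finset Plane} {k : ℤ} {p : Plane} :
    p ∈ block S ℓ j k ↔ p ∈ S ∧ blockIndex ℓ j p = k := by
  have hpos : (0 : ℝ) < 2 * ℓ := by positivity
  rw [block, mem_filter, blockIndex, Int.floor_eq_iff, le_div_iff₀ hpos, div_lt_iff₀ hpos]
  constructor <;> rintro ⟨hp, h₁, h₂⟩ <;> exact ⟨hp, by linarith, by linarith⟩

lemma mem_block_blockIndex (hℓ : 0 < ℓ) {S : Finset Plane} {p : Plane} (hp : p ∈ S) :
    p ∈ block S ℓ j (blockIndex ℓ j p) :=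
  (mem_block_iff j hℓ).2 ⟨hp, rfl⟩

lemma setOf_block_nonempty (hℓ : 0 < ℓ) (S : Finset Plane) :
    {k : ℤ | (block S ℓ j k).Nonempty} = ↑(S.image (blockIndex ℓ j)) := by
  ext k
  simp only [Set.mem_ofPred_eq, coe_image, Set.mem_image, mem_coe, Finset.Nonempty,
    mem_block_iff j hℓ]

def thickSlab (ℓ j : ℕ) (k : ℤ) : Set ℝ :=
  Set.Ico (2 * ((ℓ : ℝ) * k + j) - 1) (2 * ((ℓ : ℝ) * (k + 1) + j) + 1)

lemma Dominates.filter_thickSlab {D S : Finset Plane} (hD : Dominates D S) (k : ℤ) :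
    Dominates (D.filter fun q => q 0 ∈ thickSlab ℓ j k) (block S ℓ j k) := by
  refine Dominates.filter (fun p hp => hD p (filter_subset _ _ hp)) _ fun p hp q _ hpq => ?_
  have hpq' := abs_sub_le_iff.1 ((Real.dist_eq _ _ ▸ PiLp.dist_apply_le p q 0).trans hpq)
  obtain ⟨-, h₁, h₂⟩ := mem_filter.1 hp
  exact ⟨by linarith, by linarith⟩

/-- Writing `n = ℓ k + j`, the thick slab is `[2n - 1, 2(n + ℓ) + 1)`, so `x` lies in the thick
slabs of exactly `ℓ + 1` pairs `(j, k)` with `j < ℓ`: those with `x - 1 < 2(n + ℓ)` and `2n ≤ x + 1`. -/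
lemma sum_card_filter_mem_thickSlab_le (x : ℝ) (K : ℕ → Finset ℤ) :
    ∑ j ∈ range ℓ, #((K j).filter fun k => x ∈ thickSlab ℓ j k) ≤ ℓ + 1 := by
  rw [← card_sigma]
  set m : ℤ := ⌊(x + 1) / 2⌋
  calc _ ≤ #(Ioc (m - ℓ - 1) m) := by
        refine card_le_card_of_injOn (fun jk => ℓ * jk.2 + jk.1) ?_ ?_
        · rintro ⟨j, k⟩ hjk
          simp only [mem_coe, mem_sigma, mem_filter, thickSlab, Set.mem_Ico] at hjk
          obtain ⟨-, -, h₁, h₂⟩ := hjk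
          have hle : ℓ * k + j ≤ m := Int.le_floor.2 (by push_cast; linarith)
          have hlt : m < ℓ * k + j + ℓ + 1 := Int.floor_lt.2 (by push_cast; linarith)
          simp only [coe_Ioc, Set.mem_Ioc]
          omega
        · rintro ⟨j, k⟩ hjk ⟨j', k'⟩ hjk' h
          simp only [mem_coe, mem_sigma, mem_range] at hjk hjk' h
          have hj : (j : ℤ) = j' := by
            simpa [Int.emod_eq_of_lt, hjk.1, hjk'.1] using congrArg (· % (ℓ : ℤ)) h
          have hk : k = k' := by
            have : (ℓ : ℤ) ≠ 0 := by omega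
            exact mul_left_cancel₀ this (by omega)
          simp_all
    _ = ℓ + 1 := by simp only [Int.card_Ioc]; omega

lemma sum_sum_card_filter_thickSlab_le (D : Finset Plane) (K : ℕ → Finset ℤ) :
    ∑ j ∈ range ℓ, ∑ k ∈ K j, #(D.filter fun q => q 0 ∈ thickSlab ℓ j k) ≤ (ℓ + 1) * #D :=
  calc _ = ∑ j ∈ range ℓ, ∑ q ∈ D, #((K j).filter fun k => q 0 ∈ thickSlab ℓ j k) :=
        sum_congr rfl fun j _ => sum_card_bipartiteAbove_eq_sum_card_bipartiteBelow _
    _ = ∑ q ∈ D, ∑ j ∈ range ℓ, #((K j).filter fun k => q 0 ∈ thickSlab ℓ j k) := sum_comm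
    _ ≤ ∑ _q ∈ D, (ℓ + 1) := sum_le_sum fun q _ => sum_card_filter_mem_thickSlab_le (q 0) K
    _ = (ℓ + 1) * #D := by rw [sum_const, smul_eq_mul, mul_comm]

lemma exists_shift_sum_card_filter_thickSlab_le (hℓ : 0 < ℓ) (D : Finset Plane)
    (K : ℕ → Finset ℤ) :
    ∃ j < ℓ, ∑ k ∈ K j, (#(D.filter fun q => q 0 ∈ thickSlab ℓ j k) : ℝ) ≤
      (1 + 1 / (ℓ : ℝ)) * #D := by
  have hℓ' : (ℓ : ℝ) ≠ 0 := by positivity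
  obtain ⟨j, hj, hle⟩ := exists_le_of_sum_le (nonempty_range_iff.2 hℓ.ne')
    (f := fun j => ∑ k ∈ K j, (#(D.filter fun q => q 0 ∈ thickSlab ℓ j k) : ℝ))
    (g := fun _ => (1 + 1 / (ℓ : ℝ)) * #D) <| by
      rw [sum_const, card_range, nsmul_eq_mul]
      calc _ ≤ ((ℓ + 1 : ℕ) * #D : ℝ) := by exact_mod_cast sum_sum_card_filter_thickSlab_le D K
        _ = _ := by field_simp; push_cast; ring
  exact ⟨j, mem_range.1 hj, hle⟩

end Blocks

theorem shifting_theorem_approx_general (S : Finset Plane) (ℓ : ℕ) (hℓ : 0 < ℓ)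
    (α : ℝ) (hα : 1 ≤ α) (A : Finset Plane → Finset Plane)
    (hAdom : ∀ T ⊆ S, Dominates (A T) T)
    (hAapprox : ∀ T ⊆ S, ((A T).card : ℝ) ≤ α * (gamma S T : ℝ)) :
    (∃ j < ℓ,
      (∑ᶠ k ∈ {k : ℤ | (block S ℓ j k).Nonempty}, ((A (block S ℓ j k)).card : ℝ)) ≤
        α * (1 + 1 / (ℓ : ℝ)) * (gamma S S : ℝ)) ∧
    ∀ j < ℓ, ∀ p ∈ S, ∃ k : ℤ, ∃ q ∈ A (block S ℓ j k), dist p q ≤ 1 := by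
  refine ⟨?_, fun j _ p hp => ⟨_, hAdom _ (filter_subset _ _) p (mem_block_blockIndex j hℓ hp)⟩⟩
  obtain ⟨D, hDS, hD, hDcard⟩ := exists_dominates_card_eq_gamma (subset_refl S)
  obtain ⟨j, hj, hjD⟩ :=
    exists_shift_sum_card_filter_thickSlab_le hℓ D fun j => S.image (blockIndex ℓ j)
  refine ⟨j, hj, ?_⟩
  rw [setOf_block_nonempty j hℓ, finsum_mem_coe_finset]
  have hα₀ : 0 ≤ α := zero_le_one.trans hα
  calc ∑ k ∈ S.image (blockIndex ℓ j), ((A (block S ℓ j k)).card : ℝ)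
      ≤ ∑ k ∈ S.image (blockIndex ℓ j), α * #(D.filter fun q => q 0 ∈ thickSlab ℓ j k) := by
        refine sum_le_sum fun k _ => (hAapprox _ (filter_subset _ _)).trans ?_
        gcongr
        exact gamma_le_card ((filter_subset _ _).trans hDS) (hD.filter_thickSlab j k)
    _ ≤ α * ((1 + 1 / (ℓ : ℝ)) * #D) := by rw [← mul_sum]; gcongr
    _ = α * (1 + 1 / (ℓ : ℝ)) * (gamma S S : ℝ) := by rw [hDcard, mul_assoc]

/-- Shifting theorem (`α`-approximate solver, vertical strips): if `A` assigns to each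
`T ⊆ S` a dominating set `A(T) ⊆ S` of `T` with `|A(T)| ≤ α · γ_S(T)`, then there is a shift
`j ∈ {0, …, ℓ-1}` for which the total size of the sets `A(B_{j,k})` over the nonempty blocks
of shift `j` is at most `α (1 + 1/ℓ) γ_S(S)`; moreover for every shift `j` the union of the
sets `A(B_{j,k})` dominates `S`. -/
theorem shifting_theorem_approx (S : Finset Plane) (ℓ : ℕ) (hℓ : 0 < ℓ)
    (α : ℝ) (hα : 1 ≤ α) (A : Finset Plane → Finset Plane)
    (hAsub : ∀ T ⊆ S, A T ⊆ S)
    (hAdom : ∀ T ⊆ S, Dominates (A T) T)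
    (hAapprox : ∀ T ⊆ S, ((A T).card : ℝ) ≤ α * (gamma S T : ℝ)) :
    (∃ j < ℓ,
      (∑ᶠ k ∈ {k : ℤ | (block S ℓ j k).Nonempty}, ((A (block S ℓ j k)).card : ℝ)) ≤
        α * (1 + 1 / (ℓ : ℝ)) * (gamma S S : ℝ)) ∧
    ∀ j < ℓ, ∀ p ∈ S, ∃ k : ℤ, ∃ q ∈ A (block S ℓ j k), dist p q ≤ 1 :=
  shifting_theorem_approx_general S ℓ hℓ α hα A hAdom hAapprox
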